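/- Let d, m ≥ 1 and n = dm. If η ∈ ℤ/dℤ has order strictly smaller than d, then for every (σ_1, …, σ_d) ∈ (S_m)^d the element (σ_1, …, σ_d)·η of G = (S_m)^d ⋊ ℤ/dℤ has a nonzero fixed vector in V, i.e. it is not elliptic. -/

import Mathlib

/-!
The block index of `(σ_1, …, σ_d)·η` is shifted by `η`, so every vector depending only on the
coset of the block index modulo `H = ⟨η⟩` is fixed. Since `|H| < d`, the function equal to
`d - |H|` on `H` and to `-|H|` off `H` is nonzero and has sum zero; pulled back to the `d·m`
coordinates it is a nonzero fixed vector in `V`.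
-/

/-- The wreath product `(S_m)^d ⋊ ℤ/dℤ`, realized concretely as the subgroup of permutations
of the `n = d·m` coordinates (indexed by pairs `(i,j)` with `i : ZMod d` the block index and
`j : Fin m` the position within the block) that shift the block index by a constant amount. -/
def wrG (d m : ℕ) : Subgroup (Equiv.Perm (ZMod d × Fin m)) where
  carrier := {π | ∃ a : ZMod d, ∀ p : ZMod d × Fin m, (π p).1 = p.1 + a}
  one_mem' := ⟨0, fun p => by simp⟩
  mul_mem' := by
    rintro π σ ⟨a, ha⟩ ⟨b, hb⟩
    refine ⟨b + a, fun p => ?_⟩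
    have : (π * σ) p = π (σ p) := rfl
    rw [this, ha, hb, add_assoc]
  inv_mem' := by
    rintro π ⟨a, ha⟩
    refine ⟨-a, fun p => ?_⟩
    have h1 := ha (π⁻¹ p)
    rw [← Equiv.Perm.mul_apply, mul_inv_cancel, Equiv.Perm.one_apply] at h1
    rw [h1, add_neg_cancel_right]

/-- The element `(σ_1, …, σ_d)·ξ^a` of the wreath product `(S_m)^d ⋊ ℤ/dℤ` (here with blocks
indexed by `ZMod d`): it sends the coordinate `(i, j)` to `(i + a, σ_{i+a} j)`, i.e. first `ξ^a`
shifts every block up by `a`, and then `σ_k` permutes the coordinates within the `k`-th block. -/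
def wrElt (d m : ℕ) (σ : ZMod d → Equiv.Perm (Fin m)) (a : ZMod d) :
    Equiv.Perm (ZMod d × Fin m) where
  toFun p := (p.1 + a, σ (p.1 + a) p.2)
  invFun p := (p.1 - a, (σ p.1)⁻¹ p.2)
  left_inv p := by simp
  right_inv p := by simp

/-- An element `g` of the wreath product is elliptic if it has no nonzero fixed vector in
`V = {x ∈ ℂ^n : x_1 + ⋯ + x_n = 0}` (the action being by permutation of coordinates). -/
def IsElliptic (d m : ℕ) [NeZero d] (g : Equiv.Perm (ZMod d × Fin m)) : Prop :=
  ∀ v : ZMod d × Fin m → ℂ,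
    (∑ p : ZMod d × Fin m, v p = 0) → (∀ p, v (g p) = v p) → v = 0

section BalancedIndicator

variable {A R : Type*} [AddCommGroup A] [CommRing R]

variable (R) in
open Classical in
noncomputable def balancedIndicator (H : AddSubgroup A) (i : A) : R :=
  (if i ∈ H then (Nat.card A : R) else 0) - Nat.card H

theorem sum_balancedIndicator [Fintype A] (H : AddSubgroup A) :
    ∑ i, balancedIndicator R H i = 0 := by
  classical
  have hcard : (Finset.univ.filter (· ∈ H)).card = Nat.card H := by
    rw [Nat.card_eq_fintype_card, Fintype.card_subtype]
  simp only [balancedIndicator, Finset.sum_sub_distrib, Finset.sum_ite, Finset.sum_const_zero,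
    Finset.sum_const, hcard, Finset.card_univ, ← Nat.card_eq_fintype_card, nsmul_eq_mul]
  ring

theorem balancedIndicator_add_mem (H : AddSubgroup A) {h : A} (hh : h ∈ H) (i : A) :
    balancedIndicator R H (i + h) = balancedIndicator R H i := by
  classical
  simp only [balancedIndicator, H.add_mem_cancel_right hh]

theorem balancedIndicator_zero_ne_zero [CharZero R] {H : AddSubgroup A}
    (hH : Nat.card H < Nat.card A) : balancedIndicator R H 0 ≠ 0 := by
  simp only [balancedIndicator, H.zero_mem, if_true, sub_ne_zero]
  exact_mod_cast hH.ne'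

end BalancedIndicator

theorem stmt17_general (d m : ℕ) [NeZero d] (hm : 1 ≤ m)
    (η : ZMod d) (hη : addOrderOf η < d)
    (σ : ZMod d → Equiv.Perm (Fin m)) :
    ¬ IsElliptic d m (wrElt d m σ η) := by
  set H := AddSubgroup.zmultiples η
  have hH : Nat.card H < Nat.card (ZMod d) := by rwa [Nat.card_zmultiples, Nat.card_zmod]
  set v : ZMod d × Fin m → ℂ := fun p => balancedIndicator ℂ H p.1
  have hsum : ∑ p, v p = 0 := by
    simp [v, Fintype.sum_prod_type, ← Finset.mul_sum, sum_balancedIndicator]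
  have hfix : ∀ p, v (wrElt d m σ η p) = v p := fun p =>
    balancedIndicator_add_mem H (AddSubgroup.mem_zmultiples η) p.1
  intro hell
  exact balancedIndicator_zero_ne_zero hH (congrFun (hell v hsum hfix) (0, ⟨0, hm⟩))

/-- Let `d, m ≥ 1` and `n = dm`.  If `η ∈ ℤ/dℤ` has order strictly smaller
than `d`, then for every `(σ_1, …, σ_d) ∈ (S_m)^d` the element `(σ_1, …, σ_d)·η` of
`G = (S_m)^d ⋊ ℤ/dℤ` has a nonzero fixed vector in `V`, i.e. it is not elliptic. -/
theorem stmt17 (d m : ℕ) [NeZero d] (hd : 1 ≤ d) (hm : 1 ≤ m)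
    (η : ZMod d) (hη : addOrderOf η < d)
    (σ : ZMod d → Equiv.Perm (Fin m)) :
    ¬ IsElliptic d m (wrElt d m σ η) :=
  stmt17_general d m hm η hη σ
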